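/- Let α ∈ (-1/2, 1/2), τ ∈ (0,1), and C > 0. Define d_n = exp(n^(1+τ) + n^τ) and h_n = exp(-n^(1+τ)). Then there exist constants C', c' > 0 such that for all sufficiently large n, C d_{n-1}^(1-2α) h_n^2 ≤ C' exp(-c' n^τ) h_n^(2α+1). -/

import Mathlib

/-!
Write `a = 1 - 2α > 0` and `y = n`. After taking logarithms the claim becomes
`a ((y-1)^(1+τ) + (y-1)^τ) + c' y^τ ≤ a y^(1+τ)`. Bernoulli's inequality gives
`(y-1)^(1+τ) + (1+τ)(y-1)^τ ≤ y^(1+τ)`, which leaves the margin `a τ (y-1)^τ ≥ a τ y^τ / 2`,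
so `c' = a τ / 2` works.
-/

open Real

theorem rpow_add_mul_rpow_sub_one_le_add_one_rpow {x p : ℝ} (hx : 0 < x) (hp : 1 ≤ p) :
    x ^ p + p * x ^ (p - 1) ≤ (x + 1) ^ p := by
  have hbernoulli : 1 + p * x⁻¹ ≤ (1 + x⁻¹) ^ p :=
    one_add_mul_self_le_rpow_one_add (by linarith [inv_pos.mpr hx]) hp
  calc x ^ p + p * x ^ (p - 1) = x ^ p * (1 + p * x⁻¹) := by
        rw [rpow_sub_one hx.ne']; field_simp
    _ ≤ x ^ p * (1 + x⁻¹) ^ p := by gcongr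
    _ = (x + 1) ^ p := by
        rw [← mul_rpow hx.le (by positivity), mul_add, mul_one, mul_inv_cancel₀ hx.ne']

theorem add_one_rpow_le_two_mul_rpow {x τ : ℝ} (hx : 1 ≤ x) (hτ₀ : 0 ≤ τ) (hτ₁ : τ ≤ 1) :
    (x + 1) ^ τ ≤ 2 * x ^ τ :=
  calc (x + 1) ^ τ ≤ (2 * x) ^ τ := by gcongr; linarith
    _ = 2 ^ τ * x ^ τ := mul_rpow zero_le_two (by linarith)
    _ ≤ 2 * x ^ τ := by
        gcongr
        simpa using rpow_le_rpow_of_exponent_le one_le_two hτ₁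

theorem mul_sub_one_rpow_add_le_mul_rpow {a τ y : ℝ} (ha : 0 ≤ a) (hy : 2 ≤ y)
    (hτ₀ : 0 ≤ τ) (hτ₁ : τ ≤ 1) :
    a * ((y - 1) ^ (1 + τ) + (y - 1) ^ τ) + a * τ / 2 * y ^ τ ≤ a * y ^ (1 + τ) := by
  have hbernoulli := rpow_add_mul_rpow_sub_one_le_add_one_rpow
    (by linarith : 0 < y - 1) (by linarith : 1 ≤ 1 + τ)
  have hτ_le := add_one_rpow_le_two_mul_rpow (by linarith : 1 ≤ y - 1) hτ₀ hτ₁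
  rw [add_sub_cancel_left, sub_add_cancel] at hbernoulli
  rw [sub_add_cancel] at hτ_le
  have haτ : 0 ≤ a * τ := mul_nonneg ha hτ₀
  linarith [mul_le_mul_of_nonneg_left hbernoulli ha, mul_le_mul_of_nonneg_left hτ_le haτ]

theorem low_frequency_negligible (α τ C : ℝ)
    (hα : α ∈ Set.Ioo (-(1:ℝ)/2) (1/2)) (hτ : τ ∈ Set.Ioo (0:ℝ) 1) (hC : 0 < C) :
    ∃ C' c' : ℝ, 0 < C' ∧ 0 < c' ∧ ∃ N : ℕ, ∀ n : ℕ, N ≤ n →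
      C * (Real.exp (((n:ℝ) - 1) ^ (1 + τ) + ((n:ℝ) - 1) ^ τ)) ^ (1 - 2 * α) *
          (Real.exp (-(n:ℝ) ^ (1 + τ))) ^ (2 : ℝ)
        ≤ C' * Real.exp (-c' * (n:ℝ) ^ τ) *
          (Real.exp (-(n:ℝ) ^ (1 + τ))) ^ (2 * α + 1) := by
  obtain ⟨-, hα⟩ := hα
  obtain ⟨hτ₀, hτ₁⟩ := hτ
  have ha : 0 < 1 - 2 * α := by linarith
  refine ⟨C, (1 - 2 * α) * τ / 2, hC, by positivity, 2, fun n hn => ?_⟩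
  have hexponent := mul_sub_one_rpow_add_le_mul_rpow ha.le (by exact_mod_cast hn : (2:ℝ) ≤ n)
    hτ₀.le hτ₁.le
  rw [← exp_mul, ← exp_mul, ← exp_mul, mul_assoc, mul_assoc, ← exp_add, ← exp_add]
  refine mul_le_mul_of_nonneg_left (exp_le_exp.mpr ?_) hC.le
  linarith
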